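/- Let C ⊆ Q² satisfy conditions (I) and (II). Then for every S ⊆ C(1) × C(2), the family P₃(S) = {C' ⊆ C : |C'| ≤ 3, S = desc(C')} has at most 2 elements. -/

import Mathlib

/-!
Read `C` as a bipartite graph between first and second coordinates: condition (I) excludes
4-cycles and condition (II) excludes 6-cycles. If `desc(P) = A × B` with `|P| ≤ 3`, then `P`
is a set of at most three edges inside `A × B` meeting every vertex of `A` and of `B`, so
`|A|, |B| ≤ 3`. If `|A| ≤ 1` or `|B| ≤ 1`, then `P = A × B`. If `|A| = |B| = 2`, some corner
of `A × B` is missing from `C`, and `P` is the diagonal avoiding it, possibly with the opposite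
corner added. If `|A| = 2` and `|B| = 3` (or symmetrically), at most one column meets both
rows in `C`, so `C ∩ A × B` has at most `|B| + 1` elements, while `P` takes exactly one
element from each column and so omits one of the two elements of that column. If
`|A| = |B| = 3`, `P` is a perfect matching, and two different perfect matchings differ by a
transposition (a 4-cycle) or a 3-cycle (a 6-cycle).
-/

/-- The descendant code of a sub-code of a code of length 2, viewed as a set of pairs. -/
def desc2 {q : ℕ} (C' : Finset (Fin q × Fin q)) : Set (Fin q × Fin q) :=
  {x | (∃ c ∈ C', c.1 = x.1) ∧ (∃ c ∈ C', c.2 = x.2)}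

/-- `C` is a `t`-MIPPC of length 2: for every descendant set produced by some nonempty
sub-code of size at most `t`, all such parent sets have a common codeword. -/
def isMIPPC2 {q : ℕ} (t : ℕ) (C : Finset (Fin q × Fin q)) : Prop :=
  ∀ S : Set (Fin q × Fin q),
    (∃ C' : Finset (Fin q × Fin q), C' ⊆ C ∧ C'.Nonempty ∧ C'.card ≤ t ∧ desc2 C' = S) →
    ∃ c, ∀ C' : Finset (Fin q × Fin q),
      C' ⊆ C → C'.Nonempty → C'.card ≤ t → desc2 C' = S → c ∈ C'

/-- `A¹_a = {b : (a,b) ∈ C}`. -/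
def A1 {q : ℕ} (C : Finset (Fin q × Fin q)) (a : Fin q) : Finset (Fin q) :=
  (C.filter (fun c => c.1 = a)).image Prod.snd

/-- Condition (I). -/
def CondI {q : ℕ} (C : Finset (Fin q × Fin q)) : Prop :=
  ∀ a₁ a₂ : Fin q, a₁ ≠ a₂ → (A1 C a₁ ∩ A1 C a₂).card ≤ 1

/-- Condition (II). -/
def CondII {q : ℕ} (C : Finset (Fin q × Fin q)) : Prop :=
  ¬ ∃ a₁ a₂ a₃ b₁ b₂ b₃ : Fin q,
      a₁ ≠ a₂ ∧ a₁ ≠ a₃ ∧ a₂ ≠ a₃ ∧ b₁ ≠ b₂ ∧ b₁ ≠ b₃ ∧ b₂ ≠ b₃ ∧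
      b₁ ∈ A1 C a₁ ∧ b₂ ∈ A1 C a₁ ∧ b₂ ∈ A1 C a₂ ∧ b₃ ∈ A1 C a₂ ∧
      b₁ ∈ A1 C a₃ ∧ b₃ ∈ A1 C a₃

open Finset

section Pigeonhole

variable {α : Type*}

theorem eq_or_eq_or_eq_of_eq_or_eq {x₁ x₂ x₃ y z : α} (h₁ : x₁ = y ∨ x₁ = z)
    (h₂ : x₂ = y ∨ x₂ = z) (h₃ : x₃ = y ∨ x₃ = z) : x₁ = x₂ ∨ x₁ = x₃ ∨ x₂ = x₃ := by
  rcases h₁ with rfl | rfl <;> rcases h₂ with rfl | rfl <;> rcases h₃ with rfl | rfl <;> simp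

theorem Finset.exists_eq_pair_of_mem [DecidableEq α] {s : Finset α} {x : α} (hs : #s = 2)
    (hx : x ∈ s) : ∃ x', s = {x, x'} := by
  obtain ⟨x', hx'⟩ := card_eq_one.1 (by rw [card_erase_of_mem hx, hs] : #(s.erase x) = 1)
  exact ⟨x', by rw [← insert_erase hx, hx']⟩

theorem Finset.eq_or_eq_insert_of_subset_of_subset_insert [DecidableEq α] {s t : Finset α}
    {a : α} (hst : s ⊆ t) (hts : t ⊆ insert a s) : t = s ∨ t = insert a s := by
  by_cases ha : a ∈ t
  · exact Or.inr (hts.antisymm (insert_subset ha hst))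
  · exact Or.inl (((subset_insert_iff_of_notMem ha).1 hts).antisymm hst)

theorem eq_or_eq_or_eq_of_bijOn {β : Type*} [DecidableEq α] {f : α → β} {E P₁ P₂ P₃ : Finset α}
    {B : Finset β} (hE : Set.MapsTo f E B) (hcard : #E ≤ #B + 1)
    (h₁ : P₁ ⊆ E) (h₂ : P₂ ⊆ E) (h₃ : P₃ ⊆ E)
    (hf₁ : Set.BijOn f P₁ B) (hf₂ : Set.BijOn f P₂ B) (hf₃ : Set.BijOn f P₃ B) :
    P₁ = P₂ ∨ P₁ = P₃ ∨ P₂ = P₃ := by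
  by_cases hEB : #E ≤ #B
  · have eq_E {P : Finset α} (hP : P ⊆ E) (hf : Set.BijOn f P B) : P = E :=
      eq_of_subset_of_card_le hP (hEB.trans (hf.finsetCard_eq f).ge)
    exact Or.inl ((eq_E h₁ hf₁).trans (eq_E h₂ hf₂).symm)
  · obtain ⟨u, hu, v, hv, huv, hfuv⟩ := exists_ne_map_eq_of_card_lt_of_maps_to (by omega) hE
    -- `f` identifies `u` and `v`, so each `Pᵢ` misses one of them, and then that is all it misses.
    have eq_erase {P : Finset α} (hP : P ⊆ E) (hf : Set.BijOn f P B) :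
        P = E.erase u ∨ P = E.erase v := by
      have hcardP := hf.finsetCard_eq f
      by_cases huP : u ∈ P
      · have hvP : v ∉ P := fun hvP => huv (hf.injOn huP hvP hfuv)
        exact Or.inr (eq_of_subset_of_card_le (subset_erase.2 ⟨hP, hvP⟩)
          (by rw [card_erase_of_mem hv]; omega))
      · exact Or.inl (eq_of_subset_of_card_le (subset_erase.2 ⟨hP, huP⟩)
          (by rw [card_erase_of_mem hu]; omega))
    exact eq_or_eq_or_eq_of_eq_or_eq (eq_erase h₁ hf₁) (eq_erase h₂ hf₂) (eq_erase h₃ hf₃)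

end Pigeonhole

section ParentSets

variable {α β : Type*}

/-- Condition (I), in a form symmetric in the two coordinates. -/
def RectangleFree (C : Finset (α × β)) : Prop :=
  ∀ ⦃a a' : α⦄ ⦃b b' : β⦄, a ≠ a' → b ≠ b' →
    (a, b) ∈ C → (a, b') ∈ C → (a', b) ∈ C → (a', b') ∉ C

/-- Condition (II): `C`, as a bipartite graph, has no 6-cycle. -/
def HexagonFree (C : Finset (α × β)) : Prop :=
  ∀ ⦃a₁ a₂ a₃ : α⦄ ⦃b₁ b₂ b₃ : β⦄,
    a₁ ≠ a₂ → a₁ ≠ a₃ → a₂ ≠ a₃ → b₁ ≠ b₂ → b₁ ≠ b₃ → b₂ ≠ b₃ →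
    (a₁, b₁) ∈ C → (a₁, b₂) ∈ C → (a₂, b₂) ∈ C → (a₂, b₃) ∈ C → (a₃, b₁) ∈ C → (a₃, b₃) ∉ C

variable [DecidableEq α] [DecidableEq β] {C P Q P₁ P₂ P₃ : Finset (α × β)} {A : Finset α}
  {B : Finset β}

theorem RectangleFree.image_swap (hC : RectangleFree C) : RectangleFree (C.image Prod.swap) := by
  have mem_swap (b : β) (a : α) : (b, a) ∈ C.image Prod.swap ↔ (a, b) ∈ C := by simp
  intro b b' a a' hb ha
  simpa only [mem_swap] using fun h₁ h₂ h₃ => hC ha hb h₁ h₃ h₂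

/-- `P` is a member of the paper's `P₃(A × B)` for the code `C`. -/
structure IsParentSet (C : Finset (α × β)) (A : Finset α) (B : Finset β) (P : Finset (α × β)) :
    Prop where
  subset : P ⊆ C
  card_le : #P ≤ 3
  image_fst : P.image Prod.fst = A
  image_snd : P.image Prod.snd = B

namespace IsParentSet

theorem image_swap (h : IsParentSet C A B P) :
    IsParentSet (C.image Prod.swap) B A (P.image Prod.swap) where
  subset := image_subset_image h.subset
  card_le := card_image_le.trans h.card_le
  image_fst := by rw [image_image, ← h.image_snd]; rfl
  image_snd := by rw [image_image, ← h.image_fst]; rfl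

theorem subset_inter_product (h : IsParentSet C A B P) : P ⊆ C ∩ A ×ˢ B := by
  rw [← h.image_fst, ← h.image_snd]
  exact subset_inter h.subset subset_product

theorem eq_product (h : IsParentSet C A B P) (hAB : #A ≤ 1 ∨ #B ≤ 1) : P = A ×ˢ B := by
  refine h.subset_inter_product.trans inter_subset_right |>.antisymm ?_
  rintro ⟨a, b⟩ hab
  simp only [mem_product, ← h.image_fst, ← h.image_snd, mem_image, Prod.exists,
    exists_and_right, exists_eq_right] at hab
  obtain ⟨⟨b₀, h₀⟩, ⟨a₀, h₁⟩⟩ := hab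
  rw [← h.image_fst, ← h.image_snd, card_le_one, card_le_one] at hAB
  rcases hAB with hA | hB
  · have : a = a₀ := hA _ (mem_image_of_mem _ h₀) _ (mem_image_of_mem _ h₁)
    rwa [this]
  · have : b₀ = b := hB _ (mem_image_of_mem _ h₀) _ (mem_image_of_mem _ h₁)
    rwa [this] at h₀

theorem bijOn_snd (h : IsParentSet C A B P) (hB : #B = 3) :
    Set.BijOn (Prod.snd : α × β → β) P B := by
  have hinj : Set.InjOn (Prod.snd : α × β → β) P :=
    injOn_of_card_image_eq (le_antisymm card_image_le (h.image_snd ▸ hB ▸ h.card_le))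
  simpa [← h.image_snd] using hinj.bijOn_image

theorem exists_snd (h : IsParentSet C A B P) {a : α} (ha : a ∈ A) : ∃ b, (a, b) ∈ P := by
  simpa [← h.image_fst] using ha

theorem exists_fst (h : IsParentSet C A B P) {b : β} (hb : b ∈ B) : ∃ a, (a, b) ∈ P := by
  simpa [← h.image_snd] using hb

theorem eq_or_eq_of_notMem {x x' : α} {y y' : β} (hxy : (x, y) ∉ C)
    (h : IsParentSet C {x, x'} {y, y'} P) :
    P = {(x, y'), (x', y)} ∨ P = insert (x', y') {(x, y'), (x', y)} := by
  have hP : P ⊆ {x, x'} ×ˢ {y, y'} := h.subset_inter_product.trans inter_subset_right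
  have hxyP : (x, y) ∉ P := fun hmem => hxy (h.subset hmem)
  apply eq_or_eq_insert_of_subset_of_subset_insert
  · obtain ⟨b, hb⟩ := h.exists_snd (mem_insert_self x {x'})
    obtain ⟨a, ha⟩ := h.exists_fst (mem_insert_self y {y'})
    have hb' : b = y' := by
      have := hP hb
      simp only [mem_product, mem_insert, mem_singleton] at this
      rcases this.2 with rfl | rfl
      exacts [absurd hb hxyP, rfl]
    have ha' : a = x' := by
      have := hP ha
      simp only [mem_product, mem_insert, mem_singleton] at this
      rcases this.1 with rfl | rfl
      exacts [absurd ha hxyP, rfl]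
    subst hb' ha'
    simp [insert_subset_iff, hb, ha]
  · rintro ⟨u, v⟩ huv
    have := hP huv
    simp only [mem_product, mem_insert, mem_singleton] at this ⊢
    rcases this with ⟨rfl | rfl, rfl | rfl⟩ <;> simp_all

theorem exists_eq_triple {a₁ a₂ a₃ : α} (h₁₂ : a₁ ≠ a₂) (h₁₃ : a₁ ≠ a₃) (h₂₃ : a₂ ≠ a₃)
    (h : IsParentSet C {a₁, a₂, a₃} B P) : ∃ b₁ b₂ b₃, P = {(a₁, b₁), (a₂, b₂), (a₃, b₃)} := by
  obtain ⟨b₁, hb₁⟩ := h.exists_snd (a := a₁) (by simp)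
  obtain ⟨b₂, hb₂⟩ := h.exists_snd (a := a₂) (by simp)
  obtain ⟨b₃, hb₃⟩ := h.exists_snd (a := a₃) (by simp)
  refine ⟨b₁, b₂, b₃, (eq_of_subset_of_card_le ?_ ?_).symm⟩
  · simp [insert_subset_iff, hb₁, hb₂, hb₃]
  · rw [card_eq_three.2 ⟨_, _, _, by simp [h₁₂], by simp [h₁₃], by simp [h₂₃], rfl⟩]
    exact h.card_le

end IsParentSet

theorem RectangleFree.card_inter_pair_product_le (hC : RectangleFree C) {a a' : α} (ha : a ≠ a')
    (B : Finset β) : #(C ∩ {a, a'} ×ˢ B) ≤ #B + 1 := by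
  let row (x : α) : Finset β := B.filter fun b => (x, b) ∈ C
  have hsub : C ∩ {a, a'} ×ˢ B ⊆ {a} ×ˢ row a ∪ {a'} ×ˢ row a' := by
    rintro ⟨x, b⟩ h
    simp only [mem_inter, mem_product, mem_insert, mem_singleton] at h
    rcases h with ⟨hmem, rfl | rfl, hb⟩ <;> simp [row, hmem, hb]
  have hinter : #(row a ∩ row a') ≤ 1 := card_le_one.2 fun b hb b' hb' => by
    by_contra hbb
    simp only [row, mem_inter, mem_filter] at hb hb'
    exact hC ha hbb hb.1.2 hb'.1.2 hb.2.2 hb'.2.2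
  calc #(C ∩ {a, a'} ×ˢ B)
      ≤ #({a} ×ˢ row a ∪ {a'} ×ˢ row a') := card_le_card hsub
    _ ≤ #(row a) + #(row a') := by simpa using card_union_le ({a} ×ˢ row a) ({a'} ×ˢ row a')
    _ = #(row a ∪ row a') + #(row a ∩ row a') := (card_union_add_card_inter _ _).symm
    _ ≤ #B + 1 :=
      add_le_add (card_le_card (union_subset (filter_subset _ _) (filter_subset _ _))) hinter

theorem RectangleFree.eq_or_eq_or_eq_of_card_eq_two_of_card_eq_two (hC : RectangleFree C)
    (hA : #A = 2) (hB : #B = 2) (h₁ : IsParentSet C A B P₁) (h₂ : IsParentSet C A B P₂)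
    (h₃ : IsParentSet C A B P₃) : P₁ = P₂ ∨ P₁ = P₃ ∨ P₂ = P₃ := by
  obtain ⟨x, hx, y, hy, hxy⟩ : ∃ x ∈ A, ∃ y ∈ B, (x, y) ∉ C := by
    obtain ⟨a, a', ha, rfl⟩ := card_eq_two.1 hA
    obtain ⟨b, b', hb, rfl⟩ := card_eq_two.1 hB
    by_contra! hall
    exact hC ha hb (hall a (by simp) b (by simp)) (hall a (by simp) b' (by simp))
      (hall a' (by simp) b (by simp)) (hall a' (by simp) b' (by simp))
  obtain ⟨x', rfl⟩ := exists_eq_pair_of_mem hA hx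
  obtain ⟨y', rfl⟩ := exists_eq_pair_of_mem hB hy
  exact eq_or_eq_or_eq_of_eq_or_eq (h₁.eq_or_eq_of_notMem hxy)
    (h₂.eq_or_eq_of_notMem hxy) (h₃.eq_or_eq_of_notMem hxy)

theorem RectangleFree.eq_or_eq_or_eq_of_card_eq_two_of_card_eq_three (hC : RectangleFree C)
    (hA : #A = 2) (hB : #B = 3) (h₁ : IsParentSet C A B P₁) (h₂ : IsParentSet C A B P₂)
    (h₃ : IsParentSet C A B P₃) : P₁ = P₂ ∨ P₁ = P₃ ∨ P₂ = P₃ := by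
  obtain ⟨a, a', ha, rfl⟩ := card_eq_two.1 hA
  exact eq_or_eq_or_eq_of_bijOn (fun x hx => (mem_product.1 (mem_inter.1 hx).2).2)
    (hC.card_inter_pair_product_le ha B) h₁.subset_inter_product h₂.subset_inter_product
    h₃.subset_inter_product (h₁.bijOn_snd hB) (h₂.bijOn_snd hB) (h₃.bijOn_snd hB)

theorem eq_of_card_eq_three_of_card_eq_three (hR : RectangleFree C) (hH : HexagonFree C)
    (hA : #A = 3) (hB : #B = 3) (hP : IsParentSet C A B P) (hQ : IsParentSet C A B Q) : P = Q := by
  obtain ⟨a₁, a₂, a₃, h₁₂, h₁₃, h₂₃, rfl⟩ := card_eq_three.1 hA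
  obtain ⟨f₁, f₂, f₃, rfl⟩ := hP.exists_eq_triple h₁₂ h₁₃ h₂₃
  obtain ⟨g₁, g₂, g₃, rfl⟩ := hQ.exists_eq_triple h₁₂ h₁₃ h₂₃
  have hf : B = {f₁, f₂, f₃} := by simp [← hP.image_snd]
  have hg : B = {g₁, g₂, g₃} := by simp [← hQ.image_snd]
  obtain ⟨cf₁, cf₂, cf₃⟩ : (a₁, f₁) ∈ C ∧ (a₂, f₂) ∈ C ∧ (a₃, f₃) ∈ C := by
    simpa [insert_subset_iff] using hP.subset
  obtain ⟨cg₁, cg₂, cg₃⟩ : (a₁, g₁) ∈ C ∧ (a₂, g₂) ∈ C ∧ (a₃, g₃) ∈ C := by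
    simpa [insert_subset_iff] using hQ.subset
  obtain ⟨hf₁₂, hf₁₃, hf₂₃⟩ : f₁ ≠ f₂ ∧ f₁ ≠ f₃ ∧ f₂ ≠ f₃ := by
    refine ⟨?_, ?_, ?_⟩ <;> rintro rfl <;> grind [card_le_two]
  obtain ⟨hg₁₂, hg₁₃, hg₂₃⟩ : g₁ ≠ g₂ ∧ g₁ ≠ g₃ ∧ g₂ ≠ g₃ := by
    refine ⟨?_, ?_, ?_⟩ <;> rintro rfl <;> grind [card_le_two]
  have hgf : ∀ g ∈ ({g₁, g₂, g₃} : Finset β), g = f₁ ∨ g = f₂ ∨ g = f₃ := by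
    rw [← hg, hf]; simp
  -- `g` permutes `f`: a transposition would close a rectangle, a 3-cycle a hexagon.
  rcases hgf g₁ (by simp) with rfl | rfl | rfl <;>
    rcases hgf g₂ (by simp) with rfl | rfl | rfl <;>
    rcases hgf g₃ (by simp) with rfl | rfl | rfl <;>
    first
    | rfl
    | contradiction
    | exact (hR h₁₂ hf₁₂ cf₁ cg₁ cg₂ cf₂).elim
    | exact (hR h₁₃ hf₁₃ cf₁ cg₁ cg₃ cf₃).elim
    | exact (hR h₂₃ hf₂₃ cf₂ cg₂ cg₃ cf₃).elim
    | exact (hH h₁₂ h₁₃ h₂₃ hf₁₂ hf₁₃ hf₂₃ cf₁ cg₁ cf₂ cg₂ cg₃ cf₃).elim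
    | exact (hH h₁₂ h₁₃ h₂₃ hf₁₃.symm hf₂₃.symm hf₁₂ cg₁ cf₁ cg₂ cf₂ cf₃ cg₃).elim

theorem eq_or_eq_or_eq_of_isParentSet (hR : RectangleFree C) (hH : HexagonFree C)
    (h₁ : IsParentSet C A B P₁) (h₂ : IsParentSet C A B P₂) (h₃ : IsParentSet C A B P₃) :
    P₁ = P₂ ∨ P₁ = P₃ ∨ P₂ = P₃ := by
  by_cases hsmall : #A ≤ 1 ∨ #B ≤ 1
  · exact Or.inl ((h₁.eq_product hsmall).trans (h₂.eq_product hsmall).symm)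
  have hA_le : #A ≤ 3 := h₁.image_fst ▸ card_image_le.trans h₁.card_le
  have hB_le : #B ≤ 3 := h₁.image_snd ▸ card_image_le.trans h₁.card_le
  rcases (by omega : #A = 2 ∨ #A = 3) with hA | hA <;>
    rcases (by omega : #B = 2 ∨ #B = 3) with hB | hB
  · exact hR.eq_or_eq_or_eq_of_card_eq_two_of_card_eq_two hA hB h₁ h₂ h₃
  · exact hR.eq_or_eq_or_eq_of_card_eq_two_of_card_eq_three hA hB h₁ h₂ h₃
  · simpa only [(image_injective Prod.swap_injective).eq_iff] using
      hR.image_swap.eq_or_eq_or_eq_of_card_eq_two_of_card_eq_three hB hA h₁.image_swap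
        h₂.image_swap h₃.image_swap
  · exact Or.inl (eq_of_card_eq_three_of_card_eq_three hR hH hA hB h₁ h₂)

end ParentSets

section Code

variable {q : ℕ} {C P Q : Finset (Fin q × Fin q)}

@[simp]
theorem mem_A1 {a b : Fin q} : b ∈ A1 C a ↔ (a, b) ∈ C := by
  simp [A1]

theorem CondI.rectangleFree (hI : CondI C) : RectangleFree C :=
  fun a a' b b' ha hb h₁ h₂ h₃ h₄ =>
    (hI a a' ha).not_gt (one_lt_card.2 ⟨b, by simp [h₁, h₃], b', by simp [h₂, h₄], hb⟩)

theorem CondII.hexagonFree (hII : CondII C) : HexagonFree C :=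
  fun a₁ a₂ a₃ b₁ b₂ b₃ h₁₂ h₁₃ h₂₃ g₁₂ g₁₃ g₂₃ m₁ m₂ m₃ m₄ m₅ m₆ =>
    hII ⟨a₁, a₂, a₃, b₁, b₂, b₃, h₁₂, h₁₃, h₂₃, g₁₂, g₁₃, g₂₃, mem_A1.2 m₁, mem_A1.2 m₂,
      mem_A1.2 m₃, mem_A1.2 m₄, mem_A1.2 m₅, mem_A1.2 m₆⟩

theorem desc2_eq_image_prod_image (P : Finset (Fin q × Fin q)) :
    desc2 P = (P.image Prod.fst : Set (Fin q)) ×ˢ (P.image Prod.snd : Set (Fin q)) := by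
  ext ⟨a, b⟩
  simp [desc2]

theorem image_fst_eq_and_image_snd_eq_of_desc2_eq (h : desc2 P = desc2 Q) :
    P.image Prod.fst = Q.image Prod.fst ∧ P.image Prod.snd = Q.image Prod.snd := by
  rw [desc2_eq_image_prod_image, desc2_eq_image_prod_image, Set.prod_eq_prod_iff] at h
  rcases h with ⟨hfst, hsnd⟩ | ⟨hP, hQ⟩
  · exact ⟨coe_injective hfst, coe_injective hsnd⟩
  · obtain rfl : P = ∅ := by simpa using hP
    obtain rfl : Q = ∅ := by simpa using hQ
    simp

end Code

/-- Under conditions (I) and (II), for every `S` there are at most two sub-codes of size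
at most 3 whose descendant code equals `S`. -/
theorem parent_sets_at_most_two {q : ℕ} (C : Finset (Fin q × Fin q))
    (hI : CondI C) (hII : CondII C) :
    ∀ S : Set (Fin q × Fin q),
      ∀ C₁ C₂ C₃ : Finset (Fin q × Fin q),
        C₁ ⊆ C → C₂ ⊆ C → C₃ ⊆ C →
        C₁.card ≤ 3 → C₂.card ≤ 3 → C₃.card ≤ 3 →
        desc2 C₁ = S → desc2 C₂ = S → desc2 C₃ = S →
        C₁ = C₂ ∨ C₁ = C₃ ∨ C₂ = C₃ := by
  intro S C₁ C₂ C₃ h₁ h₂ h₃ hc₁ hc₂ hc₃ hd₁ hd₂ hd₃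
  obtain ⟨hA₂, hB₂⟩ := image_fst_eq_and_image_snd_eq_of_desc2_eq (hd₂.trans hd₁.symm)
  obtain ⟨hA₃, hB₃⟩ := image_fst_eq_and_image_snd_eq_of_desc2_eq (hd₃.trans hd₁.symm)
  exact eq_or_eq_or_eq_of_isParentSet hI.rectangleFree hII.hexagonFree ⟨h₁, hc₁, rfl, rfl⟩
    ⟨h₂, hc₂, hA₂, hB₂⟩ ⟨h₃, hc₃, hA₃, hB₃⟩
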